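/- arXiv:2004.14904 — 2 statements merged into one kernel-verified Lean document; each statement's English description precedes it below -/
import Mathlib

section
/- For integers m ≥ 1 and 0 ≤ j ≤ m, the coefficient b̂_j^{(2m+1)} in the expansion B_{2m+1}(x) = (x - 1/2) Σ_{j=0}^m b̂_j^{(2m+1)} U(x)^j, with U(x) = x(x-1)/2, is given by b̂_j^{(2m+1)} = 8^j Σ_{k=j}^m 4^{-k} C(2m+1,2k+1) C(k,j) B_{2m-2k}(1/2). -/
/-!
Taylor-expanding around `1/2` gives `B_n(1/2 + y) = ∑ C(n,k) B_{n-k}(1/2) y^k`. The reflection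
`B_n(1 - x) = (-1)^n B_n(x)` kills `B_{odd}(1/2)`, so for `n = 2m + 1` only odd powers of
`y = x - 1/2` survive. Since `y² = 2U(x) + 1/4`, expanding `y^{2k} = (2U + 1/4)^k` binomially and
exchanging the two sums yields the coefficients.
-/

open Finset

namespace Finset

theorem sum_range_two_mul {M : Type*} [AddCommMonoid M] (n : ℕ) (f : ℕ → M) :
    ∑ i ∈ range (2 * n), f i = ∑ i ∈ range n, (f (2 * i) + f (2 * i + 1)) := by
  induction n with
  | zero => simp
  | succ n ih => rw [Nat.mul_succ, sum_range_succ, sum_range_succ, sum_range_succ, ih, add_assoc]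

theorem sum_range_sum_range_succ_comm {M : Type*} [AddCommMonoid M] (m : ℕ) (f : ℕ → ℕ → M) :
    ∑ k ∈ range (m + 1), ∑ j ∈ range (k + 1), f k j =
      ∑ j ∈ range (m + 1), ∑ k ∈ Icc j m, f k j :=
  sum_comm' fun k j => by simp only [mem_range, mem_Icc]; omega

end Finset

namespace Polynomial

theorem iterate_derivative_bernoulli (k n : ℕ) :
    derivative^[k] (bernoulli n) = (n.descFactorial k : ℚ[X]) * bernoulli (n - k) := by
  induction k with
  | zero => simp
  | succ k ih =>
    rw [Function.iterate_succ_apply', ih, derivative_natCast_mul, derivative_bernoulli,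
      Nat.descFactorial_succ, Nat.sub_sub]
    push_cast
    ring

theorem hasseDeriv_bernoulli (k n : ℕ) :
    hasseDeriv k (bernoulli n) = (n.choose k : ℚ[X]) * bernoulli (n - k) := by
  apply smul_right_injective ℚ[X] k.factorial_ne_zero
  beta_reduce
  have h := congrFun (factorial_smul_hasseDeriv (R := ℚ) (k := k)) (bernoulli n)
  simp only [LinearMap.smul_apply] at h
  rw [h, iterate_derivative_bernoulli, Nat.descFactorial_eq_factorial_mul_choose, nsmul_eq_mul]
  push_cast
  ring

theorem bernoulli_eval_add (n : ℕ) (x y : ℚ) :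
    (bernoulli n).eval (x + y) =
      ∑ k ∈ range (n + 1), (n.choose k : ℚ) * (bernoulli (n - k)).eval x * y ^ k := by
  have hdeg : (taylor x (bernoulli n)).natDegree < n + 1 := by
    refine Nat.lt_succ_of_le (natDegree_le_iff_coeff_eq_zero.mpr fun k hk => ?_)
    rw [taylor_coeff, hasseDeriv_bernoulli, Nat.choose_eq_zero_of_lt (by exact_mod_cast hk)]
    simp
  rw [add_comm, ← taylor_eval, eval_eq_sum_range' hdeg]
  simp [taylor_coeff, hasseDeriv_bernoulli]

theorem bernoulli_eval_half_of_odd {n : ℕ} (hn : Odd n) :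
    (bernoulli n).eval (1 / 2 : ℚ) = 0 := by
  have h := bernoulli_eval_one_sub n (1 / 2)
  rw [hn.neg_one_pow] at h
  norm_num at h
  linarith

theorem bernoulli_odd_eval_half_add (m : ℕ) (y : ℚ) :
    (bernoulli (2 * m + 1)).eval (1 / 2 + y) =
      ∑ k ∈ range (m + 1), ((2 * m + 1).choose (2 * k + 1) : ℚ) *
        (bernoulli (2 * m - 2 * k)).eval (1 / 2) * y ^ (2 * k + 1) := by
  rw [bernoulli_eval_add, show 2 * m + 1 + 1 = 2 * (m + 1) by ring, sum_range_two_mul]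
  refine sum_congr rfl fun k hk => ?_
  have hkm : k ≤ m := Nat.lt_succ_iff.mp (mem_range.mp hk)
  rw [bernoulli_eval_half_of_odd ⟨m - k, by omega⟩,
    show 2 * m + 1 - (2 * k + 1) = 2 * m - 2 * k by omega]
  ring

end Polynomial

theorem sub_half_pow_two_mul_eq_sum (x : ℚ) (k : ℕ) :
    (x - 1 / 2) ^ (2 * k) =
      ∑ j ∈ range (k + 1), 8 ^ j * (1 / 4 ^ k) * (k.choose j : ℚ) * (x * (x - 1) / 2) ^ j := by
  rw [pow_mul, show (x - 1 / 2) ^ 2 = 2 * (x * (x - 1) / 2) + 1 / 4 by ring, add_pow]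
  refine sum_congr rfl fun j hj => ?_
  have h4 : (4 : ℚ) ^ k = 4 ^ j * 4 ^ (k - j) := by
    rw [← pow_add, Nat.add_sub_cancel' (Nat.lt_succ_iff.mp (mem_range.mp hj))]
  rw [h4, one_div_pow, show (8 : ℚ) = 2 * 4 by norm_num, mul_pow, mul_pow]
  field_simp

theorem bernoulli_odd_expansion_coeffs_general (m : ℕ) :
    ∀ x : ℚ, (Polynomial.bernoulli (2 * m + 1)).eval x =
      (x - 1 / 2) * ∑ j ∈ Finset.range (m + 1),
        (8 ^ j * ∑ k ∈ Finset.Icc j m, (1 / 4 ^ k) * ((2 * m + 1).choose (2 * k + 1) : ℚ) *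
          (k.choose j : ℚ) * (Polynomial.bernoulli (2 * m - 2 * k)).eval (1 / 2 : ℚ)) *
        (x * (x - 1) / 2) ^ j := by
  intro x
  set b : ℕ → ℚ := fun k => ((2 * m + 1).choose (2 * k + 1) : ℚ) *
    (Polynomial.bernoulli (2 * m - 2 * k)).eval (1 / 2)
  calc (Polynomial.bernoulli (2 * m + 1)).eval x
      = ∑ k ∈ range (m + 1), b k * (x - 1 / 2) ^ (2 * k + 1) := by
        have h := Polynomial.bernoulli_odd_eval_half_add m (x - 1 / 2)
        rwa [add_sub_cancel] at h
    _ = (x - 1 / 2) * ∑ k ∈ range (m + 1), ∑ j ∈ range (k + 1),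
          b k * (8 ^ j * (1 / 4 ^ k) * (k.choose j : ℚ) * (x * (x - 1) / 2) ^ j) := by
        rw [mul_sum]
        refine sum_congr rfl fun k _ => ?_
        rw [pow_succ, sub_half_pow_two_mul_eq_sum, sum_mul, mul_sum, mul_sum]
        exact sum_congr rfl fun j _ => by ring
    _ = _ := by
        rw [sum_range_sum_range_succ_comm]
        refine congrArg _ (sum_congr rfl fun j _ => ?_)
        rw [mul_sum, sum_mul]
        exact sum_congr rfl fun k _ => by ring

theorem bernoulli_odd_expansion_coeffs (m : ℕ) (hm : 1 ≤ m) :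
    ∀ x : ℚ, (Polynomial.bernoulli (2 * m + 1)).eval x =
      (x - 1 / 2) * ∑ j ∈ Finset.range (m + 1),
        (8 ^ j * ∑ k ∈ Finset.Icc j m, (1 / 4 ^ k) * ((2 * m + 1).choose (2 * k + 1) : ℚ) *
          (k.choose j : ℚ) * (Polynomial.bernoulli (2 * m - 2 * k)).eval (1 / 2 : ℚ)) *
        (x * (x - 1) / 2) ^ j :=
  bernoulli_odd_expansion_coeffs_general m
end

section
/- For every integer m ≥ 1, in the Faulhaber expansion S_{2m+1} = S_1^2 Σ_{j=0}^{m-1} c_{m,j} S_1^j (valid for all n ≥ 1), the constant coefficient satisfies c_{m,0} = (4m+2) B_{2m}. -/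
/-!
Both sides of the expansion are polynomials in `n` that agree for every `n ≥ 1`, so they are
equal in `ℚ[X]` and we may compare coefficients of `X ^ 2`. Since `S₁ = n (n + 1) / 2` is
divisible by `n`, the right side contributes `c 0 / 4` there. On the left, `S_p` is given by
the Bernoulli polynomial `B_{p+1}`, whose `X ^ 2` coefficient is `(p + 1 choose 2) B_{p-1}`,
so the left side contributes `p B_{p-1} / 2`; with `p = 2m + 1` this gives `c 0 = (4m + 2) B_{2m}`.
-/

namespace Polynomial

theorem eq_of_eval_natCast_eq {R : Type*} [CommRing R] [IsDomain R] [CharZero R]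
    {p q : R[X]} (h : ∀ n : ℕ, 1 ≤ n → p.eval (n : R) = q.eval (n : R)) : p = q := by
  refine eq_of_infinite_eval_eq p q (Set.Infinite.mono ?_ (Set.infinite_range_of_injective
    ((Nat.cast_injective (R := R)).comp (add_left_injective 1))))
  rintro _ ⟨n, rfl⟩
  exact h (n + 1) le_add_self

end Polynomial

namespace Faulhaber

open Polynomial Finset

noncomputable def triangularPoly : ℚ[X] := C 2⁻¹ * (X * (X + 1))

theorem eval_triangularPoly (n : ℕ) : triangularPoly.eval (n : ℚ) = ∑ i ∈ Icc 1 n, (i : ℚ) := by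
  induction n with
  | zero => simp [triangularPoly]
  | succ n ih =>
    rw [sum_Icc_succ_top (by omega), ← ih]
    simp only [triangularPoly, eval_mul, eval_C, eval_X, eval_add, eval_one]
    push_cast
    ring

theorem coeff_two_triangularPoly_sq_mul (f : ℚ[X]) :
    (triangularPoly ^ 2 * f).coeff 2 = f.eval 0 / 4 := by
  have : triangularPoly ^ 2 * f = X ^ 2 * (C 4⁻¹ * (X + 1) ^ 2 * f) := by
    rw [triangularPoly, mul_pow, ← C_pow, show (2⁻¹ : ℚ) ^ 2 = 4⁻¹ by norm_num]
    ring
  rw [this, coeff_X_pow_mul', if_pos le_rfl, Nat.sub_self, coeff_zero_eq_eval_zero]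
  simp only [eval_mul, eval_C, eval_pow, eval_add, eval_X, eval_one, zero_add, one_pow, mul_one]
  ring

-- The term `X ^ p` appears because `Polynomial.sum_range_pow_eq_bernoulli_sub` sums over `k < n`.
noncomputable def powerSumPoly (p : ℕ) : ℚ[X] :=
  C ((p : ℚ) + 1)⁻¹ * (Polynomial.bernoulli (p + 1) - C (_root_.bernoulli (p + 1))) + X ^ p

theorem eval_powerSumPoly {p : ℕ} (hp : p ≠ 0) (n : ℕ) :
    (powerSumPoly p).eval (n : ℚ) = ∑ i ∈ Icc 1 n, (i : ℚ) ^ p := by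
  have hIcc : ∑ i ∈ Icc 1 n, (i : ℚ) ^ p = ∑ k ∈ range n, (k : ℚ) ^ p + (n : ℚ) ^ p := by
    rw [← Ico_succ_right_eq_Icc, sum_Ico_eq_sub _ (by simp), Order.succ_eq_add_one,
      sum_range_succ, sum_range_one, Nat.cast_zero, zero_pow hp, sub_zero]
  simp only [powerSumPoly, hIcc, eval_add, eval_mul, eval_C, eval_sub, eval_pow, eval_X,
    bernoulli_succ_eval]
  field_simp
  ring

theorem coeff_two_powerSumPoly {p : ℕ} (hp : p ≠ 2) :
    (powerSumPoly p).coeff 2 = _root_.bernoulli (p - 1) * p / 2 := by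
  rw [powerSumPoly, coeff_add, coeff_C_mul, coeff_sub, coeff_C_of_ne_zero two_ne_zero,
    coeff_X_pow, if_neg (Ne.symm hp), coeff_bernoulli]
  rcases p with _ | p
  · simp
  · rw [if_pos (by omega), Nat.add_sub_cancel, Nat.cast_choose_two]
    push_cast
    field_simp
    ring

theorem powerSumPoly_eq_triangularPoly_sq_mul {p m : ℕ} (hp : p ≠ 0) (c : ℕ → ℚ)
    (hc : ∀ n : ℕ, 1 ≤ n → ∑ i ∈ Icc 1 n, (i : ℚ) ^ p =
      (∑ i ∈ Icc 1 n, (i : ℚ)) ^ 2 * ∑ j ∈ range m, c j * (∑ i ∈ Icc 1 n, (i : ℚ)) ^ j) :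
    powerSumPoly p = triangularPoly ^ 2 * ∑ j ∈ range m, C (c j) * triangularPoly ^ j :=
  eq_of_eval_natCast_eq fun n hn => by
    simp only [eval_powerSumPoly hp, hc n hn, eval_mul, eval_pow, eval_finsetSum, eval_C,
      eval_triangularPoly]

theorem eval_zero_sum_C_mul_triangularPoly_pow {m : ℕ} (hm : 0 < m) (c : ℕ → ℚ) :
    (∑ j ∈ range m, C (c j) * triangularPoly ^ j).eval 0 = c 0 := by
  have h0 : triangularPoly.eval 0 = 0 := by simp [triangularPoly]
  simp only [eval_finsetSum, eval_mul, eval_C, eval_pow, h0]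
  rw [sum_eq_single_of_mem 0 (mem_range.2 hm) fun j _ hj => by simp [hj], pow_zero, mul_one]

end Faulhaber

theorem faulhaber_odd_constant_coeff (m : ℕ) (hm : 1 ≤ m) (c : ℕ → ℚ)
    (hc : ∀ n : ℕ, 1 ≤ n →
      (∑ i ∈ Finset.Icc 1 n, (i : ℚ) ^ (2 * m + 1)) =
        (∑ i ∈ Finset.Icc 1 n, (i : ℚ)) ^ 2 *
          ∑ j ∈ Finset.range m, c j * (∑ i ∈ Finset.Icc 1 n, (i : ℚ)) ^ j) :
    c 0 = (4 * m + 2 : ℚ) * bernoulli (2 * m) := by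
  have hcoeff := congrArg (Polynomial.coeff · 2)
    (Faulhaber.powerSumPoly_eq_triangularPoly_sq_mul (by omega) c hc)
  simp only [Faulhaber.coeff_two_powerSumPoly (by omega : 2 * m + 1 ≠ 2),
    Faulhaber.coeff_two_triangularPoly_sq_mul, Faulhaber.eval_zero_sum_C_mul_triangularPoly_pow hm,
    Nat.add_sub_cancel] at hcoeff
  push_cast at hcoeff
  linarith
end
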